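/- For T admitting an A-adjoint and α ∈ [0,1], ‖T‖_{A,α}² ≥ 2 sqrt(α(1−α)) · c_A(T) · ‖T‖_A. -/

import Mathlib

open scoped ComplexOrder
open ContinuousLinearMap Filter Topology

variable {H : Type*} [NormedAddCommGroup H] [InnerProductSpace ℂ H] [CompleteSpace H]

/-- The A-semi-inner product `⟨x, y⟩_A = ⟨A x, y⟩` (Mathlib convention: conjugate
linear in the first variable). -/
noncomputable def aInner (A : H →L[ℂ] H) (x y : H) : ℂ := inner ℂ (A x) y

/-- The A-seminorm `‖x‖_A = sqrt ⟨x, x⟩_A`. -/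
noncomputable def aNorm (A : H →L[ℂ] H) (x : H) : ℝ := Real.sqrt (aInner A x x).re

/-- `T` is A-bounded. -/
def ABounded (A T : H →L[ℂ] H) : Prop := ∃ c > 0, ∀ x, aNorm A (T x) ≤ c * aNorm A x

/-- The A-operator seminorm. -/
noncomputable def opNormA (A T : H →L[ℂ] H) : ℝ :=
  sSup {r | ∃ x ∈ closure (Set.range A), aNorm A x = 1 ∧ r = aNorm A (T x)}

/-- The A-numerical radius. -/
noncomputable def wA (A T : H →L[ℂ] H) : ℝ :=
  sSup {r | ∃ x, aNorm A x = 1 ∧ r = ‖aInner A (T x) x‖}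

/-- The A-Crawford number. -/
noncomputable def cA (A T : H →L[ℂ] H) : ℝ :=
  sInf {r | ∃ x, aNorm A x = 1 ∧ r = ‖aInner A (T x) x‖}

/-- The `A_α`-seminorm `‖T‖_{A,α}`. -/
noncomputable def alphaNorm (A T : H →L[ℂ] H) (α : ℝ) : ℝ :=
  sSup {r | ∃ x, aNorm A x = 1 ∧
    r = Real.sqrt (α * ‖aInner A (T x) x‖ ^ 2 + (1 - α) * aNorm A (T x) ^ 2)}

/-- `S` is the A-adjoint `T^{♯_A}` of `T`: the solution of `A X = T* A` whose
range lies in the closure of the range of `A`. -/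
def IsAAdjoint (A T S : H →L[ℂ] H) : Prop :=
  A ∘L S = (ContinuousLinearMap.adjoint T) ∘L A ∧ ∀ x, S x ∈ closure (Set.range A)

/-!
If `T` has an `A`-adjoint `S`, then `R = S T` is `A`-symmetric, so the sequence `‖Rᵏ x‖_A` is
log-convex: `‖R x‖_A² = ⟨x, R² x⟩_A ≤ ‖x‖_A ‖R² x‖_A`. A log-convex sequence that grows at most
like `‖R‖ᵏ` has ratios bounded by `‖R‖`, whence `‖R x‖_A ≤ ‖R‖ ‖x‖_A`; as `‖T x‖_A² = ⟨x, R x⟩_A`,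
`T` is `A`-bounded and the supremum defining `‖T‖_{A,α}` is finite. For `‖x‖_A = 1`, AM-GM gives
`2 √(α(1-α)) |⟨T x, x⟩_A| ‖T x‖_A ≤ α |⟨T x, x⟩_A|² + (1-α) ‖T x‖_A² ≤ ‖T‖_{A,α}²`, and
`|⟨T x, x⟩_A| ≥ c_A(T)`; taking the supremum over `x` gives the claim.
-/

lemma le_of_eventually_pow_le_mul_pow {a b C : ℝ} (hb : 0 ≤ b)
    (h : ∀ᶠ n in atTop, a ^ n ≤ C * b ^ n) : a ≤ b := by
  by_contra! hba
  have ha : 0 < a := hb.trans_lt hba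
  have hr : Tendsto (fun n : ℕ => C * (b / a) ^ n) atTop (𝓝 0) := by
    simpa using (tendsto_pow_atTop_nhds_zero_of_lt_one (div_nonneg hb ha.le)
      ((div_lt_one ha).2 hba)).const_mul C
  obtain ⟨n, hn, hsmall⟩ := (h.and (hr.eventually (gt_mem_nhds one_pos))).exists
  have : C * b ^ n = C * (b / a) ^ n * a ^ n := by
    rw [div_pow, mul_assoc, div_mul_cancel₀ _ (pow_pos ha n).ne']
  nlinarith [pow_pos ha n]

lemma mul_le_mul_succ_of_sq_succ_le_mul {h : ℕ → ℝ} (hnonneg : ∀ k, 0 ≤ h k)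
    (hconv : ∀ k, h (k + 1) ^ 2 ≤ h k * h (k + 2)) (k : ℕ) :
    h 1 * h k ≤ h 0 * h (k + 1) := by
  induction k with
  | zero => rw [mul_comm]
  | succ k ih =>
    rcases (hnonneg (k + 1)).eq_or_lt with hzero | hpos
    · rw [← hzero, mul_zero]
      exact mul_nonneg (hnonneg 0) (hnonneg _)
    · refine le_of_mul_le_mul_right ?_ hpos
      nlinarith [hconv k, mul_le_mul_of_nonneg_right ih (hnonneg (k + 2)), hnonneg 1]

lemma le_mul_of_sq_succ_le_mul_of_eventually_le {h : ℕ → ℝ} {C r : ℝ} (hr : 0 ≤ r)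
    (hnonneg : ∀ k, 0 ≤ h k) (hconv : ∀ k, h (k + 1) ^ 2 ≤ h k * h (k + 2))
    (hgrowth : ∀ᶠ n in atTop, h n ≤ C * r ^ n) : h 1 ≤ r * h 0 := by
  have hpow : ∀ n, h 1 ^ n * h 0 ≤ h 0 ^ n * h n := by
    intro n
    induction n with
    | zero => simp
    | succ n ih =>
      calc h 1 ^ (n + 1) * h 0 = h 1 * (h 1 ^ n * h 0) := by ring
        _ ≤ h 1 * (h 0 ^ n * h n) := mul_le_mul_of_nonneg_left ih (hnonneg 1)
        _ = h 0 ^ n * (h 1 * h n) := by ring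
        _ ≤ h 0 ^ n * (h 0 * h (n + 1)) :=
          mul_le_mul_of_nonneg_left (mul_le_mul_succ_of_sq_succ_le_mul hnonneg hconv n)
            (pow_nonneg (hnonneg 0) n)
        _ = h 0 ^ (n + 1) * h (n + 1) := by ring
  rcases (hnonneg 0).eq_or_lt with hzero | hpos
  · have := hconv 0
    rw [← hzero, zero_mul] at this
    rw [← hzero, mul_zero]
    nlinarith [hnonneg 1]
  · refine le_of_eventually_pow_le_mul_pow (C := C / h 0) (mul_nonneg hr hpos.le)
      (hgrowth.mono fun n hn => ?_)
    rw [div_mul_eq_mul_div, le_div_iff₀ hpos]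
    calc h 1 ^ n * h 0 ≤ h 0 ^ n * h n := hpow n
      _ ≤ h 0 ^ n * (C * r ^ n) := mul_le_mul_of_nonneg_left hn (pow_nonneg hpos.le n)
      _ = C * (r * h 0) ^ n := by ring

lemma mul_sSup_le {s : Set ℝ} {k c : ℝ} (hk : 0 ≤ k) (hc : 0 ≤ c) (h : ∀ b ∈ s, k * b ≤ c) :
    k * sSup s ≤ c := by
  rw [← smul_eq_mul, ← Real.sSup_smul_of_nonneg hk]
  refine Real.sSup_le ?_ hc
  rintro _ ⟨b, hb, rfl⟩
  exact h b hb

lemma two_mul_sqrt_mul_mul_le_add {s t : ℝ} (hs : 0 ≤ s) (ht : 0 ≤ t) (a b : ℝ) :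
    2 * √(s * t) * a * b ≤ s * a ^ 2 + t * b ^ 2 := by
  have := two_mul_le_add_sq (√s * a) (√t * b)
  rw [Real.sqrt_mul hs]
  nlinarith [Real.sq_sqrt hs, Real.sq_sqrt ht]

section

variable {E : Type*} [NormedAddCommGroup E] [InnerProductSpace ℂ E]

def IsASymmetric (A R : E →L[ℂ] E) : Prop :=
  ∀ x y, aInner A (R x) y = aInner A x (R y)

lemma aNorm_nonneg (A : E →L[ℂ] E) (x : E) : 0 ≤ aNorm A x := Real.sqrt_nonneg _

lemma aNorm_sq {A : E →L[ℂ] E} (hA : A.IsPositive) (x : E) :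
    aNorm A x ^ 2 = (aInner A x x).re :=
  Real.sq_sqrt (hA.re_inner_nonneg_left x)

lemma cA_nonneg (A T : E →L[ℂ] E) : 0 ≤ cA A T :=
  Real.sInf_nonneg (by rintro _ ⟨_, _, rfl⟩; exact norm_nonneg _)

lemma cA_le {A T : E →L[ℂ] E} {x : E} (hx : aNorm A x = 1) : cA A T ≤ ‖aInner A (T x) x‖ :=
  csInf_le ⟨0, by rintro _ ⟨_, _, rfl⟩; exact norm_nonneg _⟩ ⟨x, hx, rfl⟩

end

section

variable {A : H →L[ℂ] H}

lemma aInner_eq_inner_sqrt (hA : A.IsPositive) (x y : H) :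
    aInner A x y = inner ℂ (CFC.sqrt A x) (CFC.sqrt A y) := by
  have hsq : A x = CFC.sqrt A (CFC.sqrt A x) := by
    conv_lhs => rw [← CFC.sq_sqrt A ((nonneg_iff_isPositive A).mpr hA)]
    rfl
  have hsa : IsSelfAdjoint (CFC.sqrt A) := IsSelfAdjoint.of_nonneg (CFC.sqrt_nonneg A)
  rw [aInner, hsq, ← adjoint_inner_left, hsa.adjoint_eq]

lemma aNorm_eq_norm_sqrt (hA : A.IsPositive) (x : H) : aNorm A x = ‖CFC.sqrt A x‖ := by
  rw [aNorm, aInner_eq_inner_sqrt hA, inner_self_eq_norm_sq_to_K]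
  norm_cast
  exact Real.sqrt_sq (norm_nonneg _)

lemma norm_aInner_le (hA : A.IsPositive) (x y : H) :
    ‖aInner A x y‖ ≤ aNorm A x * aNorm A y := by
  rw [aInner_eq_inner_sqrt hA, aNorm_eq_norm_sqrt hA, aNorm_eq_norm_sqrt hA]
  exact norm_inner_le_norm _ _

lemma re_aInner_le (hA : A.IsPositive) (x y : H) :
    (aInner A x y).re ≤ aNorm A x * aNorm A y :=
  (Complex.re_le_norm _).trans (norm_aInner_le hA x y)

lemma aNorm_le (hA : A.IsPositive) (x : H) : aNorm A x ≤ ‖CFC.sqrt A‖ * ‖x‖ :=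
  (aNorm_eq_norm_sqrt hA x).trans_le (le_opNorm _ _)

end

namespace IsASymmetric

variable {A R : H →L[ℂ] H}

lemma aNorm_apply_sq_le (hA : A.IsPositive) (hR : IsASymmetric A R) (x : H) :
    aNorm A (R x) ^ 2 ≤ aNorm A x * aNorm A (R (R x)) := by
  rw [aNorm_sq hA, hR]
  exact re_aInner_le hA _ _

lemma aNorm_apply_le (hA : A.IsPositive) (hR : IsASymmetric A R) (x : H) :
    aNorm A (R x) ≤ ‖R‖ * aNorm A x := by
  have hsucc : ∀ k, (R ^ (k + 1)) x = R ((R ^ k) x) := fun k => by rw [pow_succ']; rfl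
  have hgrowth : ∀ᶠ n in atTop, aNorm A ((R ^ n) x) ≤ (‖CFC.sqrt A‖ * ‖x‖) * ‖R‖ ^ n := by
    filter_upwards [eventually_gt_atTop 0] with n hn
    calc aNorm A ((R ^ n) x) ≤ ‖CFC.sqrt A‖ * ‖(R ^ n) x‖ := aNorm_le hA _
      _ ≤ ‖CFC.sqrt A‖ * (‖R‖ ^ n * ‖x‖) := by
        gcongr
        exact (le_opNorm _ _).trans (by gcongr; exact norm_pow_le' R hn)
      _ = (‖CFC.sqrt A‖ * ‖x‖) * ‖R‖ ^ n := by ring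
  simpa using le_mul_of_sq_succ_le_mul_of_eventually_le (norm_nonneg R)
    (fun k => aNorm_nonneg A ((R ^ k) x))
    (fun k => by simpa only [hsucc] using hR.aNorm_apply_sq_le hA ((R ^ k) x)) hgrowth

end IsASymmetric

namespace IsAAdjoint

variable {A T S : H →L[ℂ] H}

lemma aInner_left (hT : IsAAdjoint A T S) (x y : H) :
    aInner A (S x) y = aInner A x (T y) := by
  rw [aInner, aInner, ← comp_apply, hT.1, comp_apply, adjoint_inner_left]

lemma aInner_right (hA : A.IsPositive) (hT : IsAAdjoint A T S) (x y : H) :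
    aInner A x (S y) = aInner A (T x) y := by
  rw [aInner, hA.inner_left_eq_inner_right, ← inner_conj_symm, ← aInner, hT.aInner_left, aInner,
    hA.inner_left_eq_inner_right, inner_conj_symm, aInner]

lemma isASymmetric_comp (hA : A.IsPositive) (hT : IsAAdjoint A T S) :
    IsASymmetric A (S ∘L T) := fun x y => by
  rw [comp_apply, comp_apply, hT.aInner_left, hT.aInner_right hA]

lemma aNorm_apply_sq_le (hA : A.IsPositive) (hT : IsAAdjoint A T S) (x : H) :
    aNorm A (T x) ^ 2 ≤ ‖S ∘L T‖ * aNorm A x ^ 2 := by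
  calc aNorm A (T x) ^ 2 = (aInner A x (S (T x))).re := by rw [aNorm_sq hA, hT.aInner_right hA]
    _ ≤ aNorm A x * aNorm A ((S ∘L T) x) := re_aInner_le hA _ _
    _ ≤ aNorm A x * (‖S ∘L T‖ * aNorm A x) :=
      mul_le_mul_of_nonneg_left ((hT.isASymmetric_comp hA).aNorm_apply_le hA x)
        (aNorm_nonneg A x)
    _ = ‖S ∘L T‖ * aNorm A x ^ 2 := by ring

lemma aBounded (hA : A.IsPositive) (hT : IsAAdjoint A T S) : ABounded A T := by
  refine ⟨√‖S ∘L T‖ + 1, by positivity, fun x => ?_⟩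
  calc aNorm A (T x) ≤ √‖S ∘L T‖ * aNorm A x := by
        rw [← Real.sqrt_sq (aNorm_nonneg A (T x)), ← Real.sqrt_sq (aNorm_nonneg A x),
          ← Real.sqrt_mul (norm_nonneg _)]
        exact Real.sqrt_le_sqrt (hT.aNorm_apply_sq_le hA x)
    _ ≤ (√‖S ∘L T‖ + 1) * aNorm A x :=
      mul_le_mul_of_nonneg_right (le_add_of_nonneg_right zero_le_one) (aNorm_nonneg A x)

end IsAAdjoint

lemma le_alphaNorm_sq {A T : H →L[ℂ] H} (hA : A.IsPositive) (hT : ABounded A T) {α : ℝ}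
    (hα₀ : 0 ≤ α) (hα₁ : α ≤ 1) {x : H} (hx : aNorm A x = 1) :
    α * ‖aInner A (T x) x‖ ^ 2 + (1 - α) * aNorm A (T x) ^ 2 ≤ alphaNorm A T α ^ 2 := by
  obtain ⟨c, hc, hTc⟩ := hT
  have hbound : ∀ y, aNorm A y = 1 →
      α * ‖aInner A (T y) y‖ ^ 2 + (1 - α) * aNorm A (T y) ^ 2 ≤ c ^ 2 := by
    intro y hy
    have hb : aNorm A (T y) ≤ c := by simpa [hy] using hTc y
    have ha : ‖aInner A (T y) y‖ ≤ c :=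
      (norm_aInner_le hA _ _).trans (by rwa [hy, mul_one])
    nlinarith [pow_le_pow_left₀ (norm_nonneg _) ha 2, pow_le_pow_left₀ (aNorm_nonneg A _) hb 2]
  have hbdd : BddAbove {r | ∃ y, aNorm A y = 1 ∧
      r = √(α * ‖aInner A (T y) y‖ ^ 2 + (1 - α) * aNorm A (T y) ^ 2)} := by
    refine ⟨c, ?_⟩
    rintro _ ⟨y, hy, rfl⟩
    exact Real.sqrt_le_iff.2 ⟨hc.le, hbound y hy⟩
  have hq : 0 ≤ α * ‖aInner A (T x) x‖ ^ 2 + (1 - α) * aNorm A (T x) ^ 2 := by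
    have := sub_nonneg.2 hα₁
    positivity
  rw [← Real.sq_sqrt hq]
  exact pow_le_pow_left₀ (Real.sqrt_nonneg _) (le_csSup hbdd ⟨x, hx, rfl⟩) 2

theorem stmt11 (A T S : H →L[ℂ] H) (hA : A.IsPositive) (hT : IsAAdjoint A T S)
    (α : ℝ) (hα : α ∈ Set.Icc (0:ℝ) 1) :
    alphaNorm A T α ^ 2 ≥ 2 * Real.sqrt (α * (1 - α)) * cA A T * opNormA A T := by
  obtain ⟨hα₀, hα₁⟩ := hα
  rw [ge_iff_le, opNormA]
  refine mul_sSup_le (mul_nonneg (by positivity) (cA_nonneg A T)) (sq_nonneg _) ?_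
  rintro _ ⟨x, -, hx, rfl⟩
  calc 2 * √(α * (1 - α)) * cA A T * aNorm A (T x)
      ≤ 2 * √(α * (1 - α)) * ‖aInner A (T x) x‖ * aNorm A (T x) := by
        gcongr
        exacts [aNorm_nonneg A _, cA_le hx]
    _ ≤ α * ‖aInner A (T x) x‖ ^ 2 + (1 - α) * aNorm A (T x) ^ 2 :=
      two_mul_sqrt_mul_mul_le_add hα₀ (sub_nonneg.2 hα₁) _ _
    _ ≤ alphaNorm A T α ^ 2 := le_alphaNorm_sq hA (hT.aBounded hA) hα₀ hα₁ hx
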